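/- arXiv:1010.0401 — 2 statements merged into one kernel-verified Lean document; each statement's English description precedes it below -/
import Mathlib

section
/- Let T be the recursion tree of Algorithm Depth-Cover(G, γ) on a planar graph G with depth(G) ≤ γ, where each tree node w = (G(w), p(w)) consists of a planar subgraph G(w) of G and a shortest path p(w) between two external nodes of G(w), the children of w correspond to the connected components obtained by removing p(w) together with its 2γ-neighborhood from G(w), and each tree node produces clusters by Shortest-Path-Cluster(G(w), p(w), 4γ). Then for every level i ≥ 0 of T, the union of the clusters produced at all tree nodes of level i admits a valid distance-γ coloring (with respect to G) with 3 colors. -/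
/-!
Statement 2 (Lemma `color-level`).

Let `T` be the recursion tree of Algorithm `Depth-Cover(G, γ)` on a planar
graph `G` with `depth(G) ≤ γ`, where each tree node `w = (G(w), p(w))` consists
of a planar subgraph `G(w)` of `G` and a shortest path `p(w)` between two
external nodes of `G(w)`, the children of `w` correspond to the connected
components obtained by removing `p(w)` together with its `2γ`-neighborhood from
`G(w)`, and each tree node produces clusters by
`Shortest-Path-Cluster(G(w), p(w), 4γ)`.  Then for every level `i ≥ 0` of `T`,
the union of the clusters produced at all tree nodes of level `i` admits a
valid distance-`γ` coloring (with respect to `G`) with `3` colors.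
-/

open scoped ENat

variable {V : Type*}

/-- weighted shortest-path distance (`⊤` if there is no walk). -/
noncomputable def wdist (G : SimpleGraph V) (wt : Sym2 V → ℕ) (u v : V) : ℕ∞ :=
  sInf {L : ℕ∞ | ∃ p : G.Walk u v, ((p.edges.map wt).sum : ℕ∞) = L}

/-- The cluster `X` `k`-satisfies `v`: the `k`-neighborhood of `v` is in `X`. -/
def KSat (dist : V → V → ℕ∞) (X : Set V) (k : ℕ) (v : V) : Prop :=
  ∀ u, dist v u ≤ (k : ℕ∞) → u ∈ X

/-- `dist(X, Y) ≤ k` for two clusters. -/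
def ClusterDistLE (dist : V → V → ℕ∞) (k : ℕ) (X Y : Set V) : Prop :=
  ∃ u ∈ X, ∃ v ∈ Y, KSat dist X k u ∧ KSat dist Y k v ∧ dist u v ≤ (k : ℕ∞)

/-- restriction of `G` to the vertex set `S` (the subgraph induced on `S`). -/
def restrictTo (G : SimpleGraph V) (S : Set V) : SimpleGraph V where
  Adj a b := G.Adj a b ∧ a ∈ S ∧ b ∈ S
  symm := ⟨fun _ _ h => ⟨h.1.symm, h.2.2, h.2.1⟩⟩
  loopless := ⟨fun _ h => G.irrefl h.1⟩

def HasK5Minor (G : SimpleGraph V) : Prop :=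
  ∃ B : Fin 5 → Set V,
    (∀ i, (B i).Nonempty) ∧
    (∀ i, (G.induce (B i)).Connected) ∧
    (Pairwise fun i j => Disjoint (B i) (B j)) ∧
    (Pairwise fun i j => ∃ u ∈ B i, ∃ v ∈ B j, G.Adj u v)

def HasK33Minor (G : SimpleGraph V) : Prop :=
  ∃ B C : Fin 3 → Set V,
    (∀ i, (B i).Nonempty) ∧ (∀ i, (C i).Nonempty) ∧
    (∀ i, (G.induce (B i)).Connected) ∧ (∀ i, (G.induce (C i)).Connected) ∧
    (Pairwise fun i j => Disjoint (B i) (B j)) ∧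
    (Pairwise fun i j => Disjoint (C i) (C j)) ∧
    (∀ i j, Disjoint (B i) (C j)) ∧
    (∀ i j, ∃ u ∈ B i, ∃ v ∈ C j, G.Adj u v)

/-- Wagner's characterization of planarity: no `K₅` minor and no `K₃,₃` minor. -/
def IsPlanar (G : SimpleGraph V) : Prop := ¬ HasK5Minor G ∧ ¬ HasK33Minor G


lemma wdist_le_walk {V : Type*} (G : SimpleGraph V) (wt : Sym2 V → ℕ) {u v : V}
    (p : G.Walk u v) : wdist G wt u v ≤ ((p.edges.map wt).sum : ℕ∞) :=
  sInf_le ⟨p, rfl⟩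

lemma exists_walk_of_wdist_le {V : Type*} {G : SimpleGraph V} {wt : Sym2 V → ℕ} {u v : V}
    {L : ℕ} (h : wdist G wt u v ≤ (L : ℕ∞)) :
    ∃ p : G.Walk u v, (p.edges.map wt).sum ≤ L := by
  by_contra hc
  push_neg at hc
  have h1 : (((L + 1 : ℕ)) : ℕ∞) ≤ wdist G wt u v := by
    apply le_sInf
    rintro _ ⟨p, rfl⟩
    exact_mod_cast Nat.succ_le_of_lt (hc p)
  have h2 := le_trans h1 h
  rw [Nat.cast_le] at h2
  omega

theorem depth_cover_level_coloring
    {ι : Type*} (G : SimpleGraph V) (hplanar : IsPlanar G)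
    (wt : Sym2 V → ℕ) (hwt : ∀ e ∈ G.edgeSet, 1 ≤ wt e)
    (γ : ℕ) (hγ : 0 < γ)
    -- the recursion tree `T` of `Depth-Cover(G,γ)`: tree node `w` has level
    -- `level w`, subgraph `G(w)` on the vertices `sub w`, and shortest path
    -- `p(w)` with vertex set `pathSet w` parameterized by positions `pos w`
    (level : ι → ℕ) (sub : ι → Set V)
    (pathSet : ι → Set V) (pos : ι → V → ℕ)
    (hpath_sub : ∀ w, pathSet w ⊆ sub w)
    -- `p(w)` is a shortest path of the subgraph `G(w)`:
    (hgeodesic : ∀ w, ∀ u ∈ pathSet w, ∀ v ∈ pathSet w,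
        wdist (restrictTo G (sub w)) wt u v = (Nat.dist (pos w u) (pos w v) : ℕ∞))
    -- subgraphs of distinct tree nodes at the same level are disjoint
    -- (they are distinct connected components created by the recursion):
    (hdisj : ∀ w₁ w₂ : ι, w₁ ≠ w₂ → level w₁ = level w₂ →
        Disjoint (sub w₁) (sub w₂))
    -- the clusters of `Shortest-Path-Cluster(G(w), p(w), 4γ)`: the `j`-th
    -- cluster is the `4γ`-neighborhood (within `G(w)`) of the `j`-th
    -- consecutive subpath of `p(w)` of length `4γ`:
    (cluster : ι → ℕ → Set V)
    (hcluster : ∀ w j, cluster w j =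
        {u | u ∈ sub w ∧ ∃ x, x ∈ pathSet w ∧
          4 * γ * j ≤ pos w x ∧ pos w x < 4 * γ * (j + 1) ∧
          wdist (restrictTo G (sub w)) wt x u ≤ ((4 * γ : ℕ) : ℕ∞)}) :
    -- for every level `i` of `T`, the union of the clusters produced at the
    -- tree nodes of level `i` admits a valid distance-`γ` coloring
    -- (with respect to `G`) with `3` colors:
    ∀ i : ℕ, ∃ col : ι × ℕ → ℕ,
      (∀ p, col p ∈ Finset.Icc 1 3) ∧
      ∀ p q : ι × ℕ, level p.1 = i → level q.1 = i →
        cluster p.1 p.2 ≠ cluster q.1 q.2 →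
        ClusterDistLE (wdist G wt) γ (cluster p.1 p.2) (cluster q.1 q.2) →
        col p ≠ col q := by
  intro i
  refine ⟨fun p => p.2 % 3 + 1, ?_, ?_⟩
  · intro p; simp only [Finset.mem_Icc]; omega
  intro p q hp hq hne hdist hcol
  obtain ⟨u, hu, v, hv, hKu, hKv, huv⟩ := hdist
  have hvX : v ∈ cluster p.1 p.2 := hKu v huv
  obtain ⟨w, j⟩ := p
  obtain ⟨w', j'⟩ := q
  simp only at hvX hv hu hne hcol hp hq
  by_cases hw : w = w'
  · subst hw
    have hjj' : j ≠ j' := fun h => hne (by rw [h])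
    rw [hcluster] at hvX hv
    obtain ⟨hvs, x, hx, hx1, hx2, hxd⟩ := hvX
    obtain ⟨_, y, hy, hy1, hy2, hyd⟩ := hv
    obtain ⟨px, hpx⟩ := exists_walk_of_wdist_le hxd
    obtain ⟨py, hpy⟩ := exists_walk_of_wdist_le hyd
    have hxy : wdist (restrictTo G (sub w)) wt x y ≤ ((8 * γ : ℕ) : ℕ∞) := by
      refine le_trans (wdist_le_walk _ _ (px.append py.reverse)) ?_
      rw [Nat.cast_le, SimpleGraph.Walk.edges_append, SimpleGraph.Walk.edges_reverse,
        List.map_append, List.sum_append, List.map_reverse, List.sum_reverse]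
      omega
    rw [hgeodesic w x hx y hy, Nat.cast_le] at hxy
    have hmod : j % 3 = j' % 3 := by omega
    have hdistxy : Nat.dist (pos w x) (pos w y) = pos w x - pos w y + (pos w y - pos w x) := rfl
    rcases Nat.lt_or_ge j j' with hlt | hge
    · have h3 : j + 3 ≤ j' := by omega
      have hm : 4 * γ * (j + 3) ≤ 4 * γ * j' := Nat.mul_le_mul_left _ h3
      have he : 4 * γ * (j + 3) = 4 * γ * (j + 1) + 8 * γ := by ring
      omega
    · have h3 : j' + 3 ≤ j := by omega
      have hm : 4 * γ * (j' + 3) ≤ 4 * γ * j := Nat.mul_le_mul_left _ h3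
      have he : 4 * γ * (j' + 3) = 4 * γ * (j' + 1) + 8 * γ := by ring
      omega
  · have hdj := hdisj w w' hw (hp.trans hq.symm)
    rw [hcluster] at hvX hv
    exact hdj.le_bot ⟨hvX.1, hv.1⟩
end

section
/- For any demand set A and any level i with 2 ≤ i ≤ κ−1, the optimal cost satisfies C*(A) ≥ R(i)/χ, where R(i) = Σ_{X ∈ Z_i} f(|X(A)|)·γ_i/2. -/
/-!
Statement 8 (Lemma `lower-bound-big`).

For any demand set `A` and any level `i` with `2 ≤ i ≤ κ−1`, the optimal cost
satisfies `C*(A) ≥ R(i)/χ`, where `R(i) = Σ_{X ∈ Z_i} f(|X(A)|)·γ_i/2`.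
-/

open scoped ENat

variable {V : Type*}

/-- A canonical fusion function: non-negative, non-decreasing, concave,
`f 0 = 0`, and subadditive. -/
structure Canonical (f : ℕ → ℝ) : Prop where
  nonneg : ∀ n, 0 ≤ f n
  mono : Monotone f
  zero : f 0 = 0
  subadd : ∀ a b : ℕ, f (a + b) ≤ f a + f b
  concave : ∀ n : ℕ, f (n + 2) + f n ≤ 2 * f (n + 1)

/-- The total cost `C(A) = Σ_e f(|φ_e(A)|)·w_e` of routing the demands of `A`
along the walks `R d` (the demand `d` goes from `src d` to `tgt d`). -/
noncomputable def routeCost {ι : Type*} [Fintype V] [DecidableEq V] [DecidableEq ι]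
    (G : SimpleGraph V) [DecidableRel G.Adj] (wt : Sym2 V → ℕ) (f : ℕ → ℝ)
    (A : Finset ι) {src tgt : ι → V} (R : (d : ι) → G.Walk (src d) (tgt d)) : ℝ :=
  ∑ e ∈ G.edgeFinset, f ((A.filter fun d => e ∈ (R d).edges).card) * (wt e : ℝ)

/-- The optimal cost `C*(A)`: the minimum of `C(A)` over all choices of one
routing path per demand. -/
noncomputable def optCost {ι : Type*} [Fintype V] [DecidableEq V] [DecidableEq ι]
    (G : SimpleGraph V) [DecidableRel G.Adj] (wt : Sym2 V → ℕ) (f : ℕ → ℝ)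
    (A : Finset ι) (src tgt : ι → V) : ℝ :=
  sInf {c : ℝ | ∃ R : (d : ι) → G.Walk (src d) (tgt d), c = routeCost G wt f A R}

/-- The (weighted) diameter `D` of the graph. -/
noncomputable def wdiam [Fintype V] (G : SimpleGraph V) (wt : Sym2 V → ℕ) : ℕ :=
  (Finset.univ.sup fun p : V × V => wdist G wt p.1 p.2).toNat


section AuxLemmas

variable {V : Type*}

lemma enat_sInf_mem {S : Set ℕ∞} (h : S.Nonempty) : sInf S ∈ S := by
  by_cases hn : ∃ n : ℕ, (n : ℕ∞) ∈ S
  · obtain ⟨n, hn⟩ := hn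
    have hT : {m : ℕ | (m : ℕ∞) ∈ S}.Nonempty := ⟨n, hn⟩
    have hk := Nat.sInf_mem hT
    have heq : sInf S = ((sInf {m : ℕ | (m : ℕ∞) ∈ S} : ℕ) : ℕ∞) := by
      apply le_antisymm
      · exact sInf_le hk
      · apply le_sInf
        intro x hx
        cases x with
        | top => exact le_top
        | coe m => exact_mod_cast Nat.sInf_le hx
    rw [heq]; exact hk
  · push_neg at hn
    have hS : S = {⊤} := by
      apply Set.eq_singleton_iff_nonempty_unique_mem.mpr
      refine ⟨h, fun x hx => ?_⟩
      cases x with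
      | top => rfl
      | coe m => exact absurd hx (hn m)
    rw [hS]; simp

lemma wdist_le {G : SimpleGraph V} {wt : Sym2 V → ℕ} {u v : V} (p : G.Walk u v) :
    wdist G wt u v ≤ ((p.edges.map wt).sum : ℕ∞) := sInf_le ⟨p, rfl⟩

lemma wdist_exists {G : SimpleGraph V} {wt : Sym2 V → ℕ} {u v : V} (h : G.Reachable u v) :
    ∃ p : G.Walk u v, ((p.edges.map wt).sum : ℕ∞) = wdist G wt u v := by
  have hne : {L : ℕ∞ | ∃ p : G.Walk u v, ((p.edges.map wt).sum : ℕ∞) = L}.Nonempty :=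
    h.elim fun p => ⟨_, p, rfl⟩
  exact enat_sInf_mem hne

lemma wdist_self {G : SimpleGraph V} {wt : Sym2 V → ℕ} (v : V) : wdist G wt v v = 0 := by
  refine le_antisymm ?_ zero_le
  have := wdist_le (wt := wt) (SimpleGraph.Walk.nil (u := v) (G := G))
  simpa using this

lemma wdist_comm {G : SimpleGraph V} {wt : Sym2 V → ℕ} (u v : V) :
    wdist G wt u v = wdist G wt v u := by
  unfold wdist
  congr 1
  ext L
  constructor
  · rintro ⟨p, rfl⟩
    exact ⟨p.reverse, by simp [List.sum_reverse]⟩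
  · rintro ⟨p, rfl⟩
    exact ⟨p.reverse, by simp [List.sum_reverse]⟩

lemma wdist_triangle {G : SimpleGraph V} {wt : Sym2 V → ℕ} (u v w : V) :
    wdist G wt u w ≤ wdist G wt u v + wdist G wt v w := by
  by_cases h1 : wdist G wt u v = ⊤
  · simp [h1]
  by_cases h2 : wdist G wt v w = ⊤
  · simp [h2]
  have hr1 : G.Reachable u v := by
    by_contra hr
    have : {L : ℕ∞ | ∃ p : G.Walk u v, ((p.edges.map wt).sum : ℕ∞) = L} = ∅ := by
      ext L; simp only [Set.mem_setOf_eq, Set.mem_empty_iff_false, iff_false]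
      rintro ⟨p, -⟩; exact hr ⟨p⟩
    exact h1 (by rw [wdist, this, sInf_empty])
  have hr2 : G.Reachable v w := by
    by_contra hr
    have : {L : ℕ∞ | ∃ p : G.Walk v w, ((p.edges.map wt).sum : ℕ∞) = L} = ∅ := by
      ext L; simp only [Set.mem_setOf_eq, Set.mem_empty_iff_false, iff_false]
      rintro ⟨p, -⟩; exact hr ⟨p⟩
    exact h2 (by rw [wdist, this, sInf_empty])
  obtain ⟨p, hp⟩ := wdist_exists (wt := wt) hr1
  obtain ⟨q, hq⟩ := wdist_exists (wt := wt) hr2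
  calc wdist G wt u w ≤ (((p.append q).edges.map wt).sum : ℕ∞) := wdist_le _
    _ = ((p.edges.map wt).sum : ℕ∞) + ((q.edges.map wt).sum : ℕ∞) := by
        rw [SimpleGraph.Walk.edges_append, List.map_append, List.sum_append]
        push_cast; ring
    _ = wdist G wt u v + wdist G wt v w := by rw [hp, hq]

lemma wdist_adj {G : SimpleGraph V} {wt : Sym2 V → ℕ} {a b : V} (h : G.Adj a b) :
    wdist G wt a b ≤ (wt s(a, b) : ℕ∞) := by
  have := wdist_le (wt := wt) (SimpleGraph.Walk.cons h SimpleGraph.Walk.nil)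
  simpa using this

lemma canonical_ratio {f : ℕ → ℝ} (hf : Canonical f) :
    ∀ k n : ℕ, n ≤ k → (n : ℝ) * f k ≤ (k : ℝ) * f n := by
  have Q : ∀ k : ℕ, (k : ℝ) * f (k + 1) ≤ ((k : ℝ) + 1) * f k := by
    intro k
    induction k with
    | zero => simp [hf.zero]
    | succ k ih =>
      have hc := hf.concave k
      push_cast
      nlinarith [hf.nonneg (k + 1)]
  intro k
  induction k with
  | zero => intro n hn; interval_cases n; simp
  | succ k ih =>
    intro n hn
    rcases eq_or_lt_of_le hn with h | h
    · subst h; simp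
    have hn' : n ≤ k := by omega
    have h1 := ih n hn'
    have h2 := Q k
    rcases Nat.eq_zero_or_pos k with hk | hk
    · subst hk
      interval_cases n
      simp [hf.zero]
    have hkR : (0 : ℝ) < (k : ℝ) := by positivity
    have key : (k : ℝ) * ((n : ℝ) * f (k + 1)) ≤ (k : ℝ) * (((k : ℝ) + 1) * f n) := by
      have a1 : (n : ℝ) * ((k : ℝ) * f (k + 1)) ≤ (n : ℝ) * (((k : ℝ) + 1) * f k) :=
        mul_le_mul_of_nonneg_left h2 (by positivity)
      have a2 : ((k : ℝ) + 1) * ((n : ℝ) * f k) ≤ ((k : ℝ) + 1) * ((k : ℝ) * f n) :=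
        mul_le_mul_of_nonneg_left h1 (by positivity)
      nlinarith
    have := le_of_mul_le_mul_left key hkR
    push_cast
    linarith

lemma prefix_sum {V : Type*} (G : SimpleGraph V) (wt : Sym2 V → ℕ) (ρ : ℕ)
    (Dd : V → V → ℕ) (cc : V → Sym2 V → ℕ)
    (htri : ∀ s u v : V, G.Adj u v → Dd s v ≤ Dd s u + wt s(u, v))
    (hclo : ∀ s u v : V, G.Adj u v → min (wt s(u, v)) (ρ - Dd s u) ≤ cc s s(u, v))
    (s : V) : ∀ {u t : V} (p : G.Walk u t),
      min ρ (Dd s t) ≤ Dd s u + (p.edges.map (cc s)).sum := by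
  intro u t p
  induction p with
  | nil => simpa using min_le_right ρ (Dd s _)
  | @cons u v w h q ih =>
    rw [SimpleGraph.Walk.edges_cons, List.map_cons, List.sum_cons]
    have h1 := htri s u v h
    have h2 := hclo s u v h
    omega

end AuxLemmas

theorem lower_bound_big
    {ι : Type*} [Fintype V] [DecidableEq V] [DecidableEq ι]
    (G : SimpleGraph V) [DecidableRel G.Adj]
    (hconn : G.Connected) (hplanar : IsPlanar G)
    (wt : Sym2 V → ℕ) (hwt : ∀ e ∈ G.edgeSet, 1 ≤ wt e)
    (f : ℕ → ℝ) (hf : Canonical f)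
    -- the parameters of the analysis:
    (σ β χ : ℕ) (hσ : σ = 24) (hβ : β = 18) (hχ : χ = 18)
    (γ : ℕ → ℕ) (hγ : ∀ i, γ i = (4 * σ) ^ (i - 1))
    (κ : ℕ) (hκ : κ = 1 + Nat.clog (4 * σ) (wdiam G wt))
    -- the covers `Z_0, …, Z_κ` with their leaders:
    (Z : ℕ → Finset (Set V)) (leader : Set V → V)
    (hZ0 : ∀ X, X ∈ Z 0 ↔ ∃ v : V, X = {v})
    (hleader : ∀ i, ∀ X ∈ Z i, leader X ∈ X)
    -- `Z_i` is a `γ_i`-cover of `G` for `i ≥ 1` …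
    (hcover : ∀ i, 1 ≤ i → ∀ v : V, ∃ X ∈ Z i, KSat (wdist G wt) X (γ i) v)
    -- … with degree at most `β` …
    (hdeg : ∀ i, 1 ≤ i → ∀ v : V,
        ({X | X ∈ Z i ∧ v ∈ X} : Set (Set V)).ncard ≤ β)
    -- … stretch at most `σ` …
    (hradius : ∀ i, 1 ≤ i → ∀ X ∈ Z i, ∀ v ∈ X,
        wdist G wt (leader X) v ≤ ((σ * γ i : ℕ) : ℕ∞))
    -- … and a valid distance-`γ_i` coloring with `χ` colors:
    (col : ℕ → Set V → ℕ)
    (hcol_mem : ∀ i, 1 ≤ i → ∀ X ∈ Z i, col i X ∈ Finset.Icc 1 χ)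
    (hcol_valid : ∀ i, 1 ≤ i → ∀ X ∈ Z i, ∀ Y ∈ Z i, X ≠ Y →
        ClusterDistLE (wdist G wt) (γ i) X Y → col i X ≠ col i Y)
    -- the demands `A`, each going from its source to its destination:
    (A : Finset ι) (src tgt : ι → V) (hst : ∀ d ∈ A, src d ≠ tgt d)
    -- `XA i X` is the set `X(A)` of demands with source in `X ∈ Z_i` whose
    -- `FindPaths` paths leave from the leader of `X` toward the leader of a
    -- higher-level cluster; consequently (by the algorithm):
    (XA : ℕ → Set V → Finset ι)
    (hXA_sub : ∀ i X, XA i X ⊆ A)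
    (hXA_mem : ∀ i, ∀ X ∈ Z i, ∀ d ∈ XA i X, src d ∈ X)
    (hXA_sat : ∀ i, 1 ≤ i → ∀ X ∈ Z i, ∀ d ∈ XA i X,
        KSat (wdist G wt) X (γ i) (src d))
    (hXA_far : ∀ i, ∀ X ∈ Z i, ∀ d ∈ XA i X,
        ((γ (i + 1) : ℕ) : ℕ∞) ≤ 2 * wdist G wt (src d) (tgt d))
    (hXA_disj : ∀ i, ∀ X ∈ Z i, ∀ Y ∈ Z i, X ≠ Y →
        Disjoint (XA i X) (XA i Y))
    -- the level `i`:
    (i : ℕ) (hi2 : 2 ≤ i) (hiκ : i ≤ κ - 1) :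
    -- `C*(A) ≥ R(i)/χ` where `R(i) = Σ_{X ∈ Z_i} f(|X(A)|)·γ_i/2`:
    (∑ X ∈ Z i, f ((XA i X).card) * ((γ i : ℝ) / 2)) / (χ : ℝ) ≤
      optCost G wt f A src tgt := by
  have hχpos : (0 : ℝ) < (χ : ℝ) := by rw [hχ]; norm_num
  have h96 : 4 * σ = 96 := by rw [hσ]
  obtain ⟨j, hj⟩ : ∃ j, i = j + 2 := ⟨i - 2, by omega⟩
  set ρ : ℕ := 48 * 96 ^ j with hρdef
  have hγi : γ i = 2 * ρ := by
    rw [hγ, h96, hj, hρdef]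
    have hj1 : j + 2 - 1 = j + 1 := by omega
    rw [hj1, pow_succ]; ring
  have hγi1 : γ (i + 1) = 192 * ρ := by
    rw [hγ, h96, hj, hρdef]
    have hj1 : j + 2 + 1 - 1 = (j + 1) + 1 := by omega
    rw [hj1, pow_succ, pow_succ]; ring
  have hreach : ∀ u v : V, G.Reachable u v := hconn.preconnected
  have hfin : ∀ u v : V, wdist G wt u v ≠ ⊤ := by
    intro u v
    obtain ⟨p⟩ := hreach u v
    exact ne_top_of_le_ne_top (ENat.coe_ne_top _) (wdist_le p)
  set Dd : V → V → ℕ := fun u v => (wdist G wt u v).toNat with hDd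
  have hcast : ∀ u v : V, ((Dd u v : ℕ) : ℕ∞) = wdist G wt u v := fun u v =>
    ENat.coe_toNat (hfin u v)
  have hD_self : ∀ v : V, Dd v v = 0 := by
    intro v
    have h := wdist_self (G := G) (wt := wt) v
    rw [hDd]; simp [h]
  have hD_comm : ∀ u v : V, Dd u v = Dd v u := by
    intro u v; rw [hDd]; simp [wdist_comm u v]
  have hD_tri : ∀ u v w : V, Dd u w ≤ Dd u v + Dd v w := by
    intro u v w
    have h := wdist_triangle (G := G) (wt := wt) u v w
    rw [← hcast, ← hcast, ← hcast] at h
    exact_mod_cast h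
  have hD_adj : ∀ a b : V, G.Adj a b → Dd a b ≤ wt s(a, b) := by
    intro a b hab
    have h := wdist_adj (wt := wt) hab
    rw [← hcast] at h
    exact_mod_cast h
  set med : V → Sym2 V → ℕ := fun s e =>
    Sym2.lift ⟨fun a b => min (Dd s a) (Dd s b), fun a b => min_comm _ _⟩ e with hmed
  set cc : V → Sym2 V → ℕ := fun s e => min (wt e) (ρ - med s e) with hcc
  have hmed_mk : ∀ (s a b : V), med s s(a, b) = min (Dd s a) (Dd s b) := by
    intro s a b; simp [hmed]
  have htri' : ∀ s u v : V, G.Adj u v → Dd s v ≤ Dd s u + wt s(u, v) := by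
    intro s u v h
    have h1 := hD_tri s u v
    have h2 := hD_adj u v h
    omega
  have hclo' : ∀ s u v : V, G.Adj u v → min (wt s(u, v)) (ρ - Dd s u) ≤ cc s s(u, v) := by
    intro s u v h
    have h1 : med s s(u, v) ≤ Dd s u := by rw [hmed_mk]; exact min_le_left _ _
    rw [hcc]
    exact min_le_min le_rfl (by omega)
  have hfar2 : ∀ X ∈ Z i, ∀ Y ∈ Z i, X ≠ Y → col i X = col i Y →
      ∀ d ∈ XA i X, ∀ d' ∈ XA i Y, 2 * ρ < Dd (src d) (src d') := by
    intro X hX Y hY hXY hcXY d hd d' hd'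
    by_contra hle
    push_neg at hle
    refine hcol_valid i (by omega) X hX Y hY hXY ?_ hcXY
    refine ⟨src d, hXA_mem i X hX d hd, src d', hXA_mem i Y hY d' hd',
      hXA_sat i (by omega) X hX d hd, hXA_sat i (by omega) Y hY d' hd', ?_⟩
    rw [← hcast]
    exact Nat.cast_le.mpr (show Dd (src d) (src d') ≤ γ i by omega)
  rw [optCost]
  refine le_csInf ⟨_, fun d => (hreach (src d) (tgt d)).some, rfl⟩ ?_
  rintro b ⟨R, rfl⟩
  rw [div_le_iff₀ hχpos]
  have hhalf : ((γ i : ℝ) / 2) = (ρ : ℝ) := by rw [hγi]; push_cast; ring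
  simp only [hhalf]
  set nE : Sym2 V → ℕ := fun e => (A.filter fun d => e ∈ (R d).edges).card with hnE
  -- per-demand bound
  have hdemand : ∀ X ∈ Z i, ∀ d ∈ XA i X,
      ρ ≤ ∑ e ∈ G.edgeFinset, if e ∈ ((R d).bypass).edges then cc (src d) e else 0 := by
    intro X hX d hd
    have hDst : ρ ≤ Dd (src d) (tgt d) := by
      have h1 := hXA_far i X hX d hd
      rw [← hcast] at h1
      have h2 : γ (i + 1) ≤ 2 * Dd (src d) (tgt d) := by exact_mod_cast h1
      omega
    have h3 := prefix_sum G wt ρ Dd cc htri' hclo' (src d) ((R d).bypass)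
    rw [hD_self, min_eq_left hDst, zero_add] at h3
    have hnd : ((R d).bypass).edges.Nodup := ((R d).bypass_isPath).edges_nodup
    have h5 : (((R d).bypass).edges.map (cc (src d))).sum
        = ∑ e ∈ ((R d).bypass).edges.toFinset, cc (src d) e :=
      (List.sum_toFinset _ hnd).symm
    have hsub : ((R d).bypass).edges.toFinset ⊆ G.edgeFinset := by
      intro e he
      exact SimpleGraph.mem_edgeFinset.mpr
        (((R d).bypass).edges_subset_edgeSet (List.mem_toFinset.mp he))
    have h6 : ∑ e ∈ ((R d).bypass).edges.toFinset, cc (src d) e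
        = ∑ e ∈ G.edgeFinset, if e ∈ ((R d).bypass).edges then cc (src d) e else 0 := by
      simp only [← List.mem_toFinset]
      rw [Finset.sum_ite_mem, Finset.inter_eq_right.mpr hsub]
    omega
  -- the main per-color estimate
  have hcolor : ∀ t : ℕ,
      ∑ X ∈ (Z i).filter (fun X => col i X = t), f ((XA i X).card) * (ρ : ℝ)
        ≤ routeCost G wt f A R := by
    intro t
    set Zt := (Z i).filter (fun X => col i X = t) with hZt
    have hZtZ : ∀ X ∈ Zt, X ∈ Z i := fun X hX => (Finset.mem_filter.mp hX).1
    have hZtcol : ∀ X ∈ Zt, col i X = t := fun X hX => (Finset.mem_filter.mp hX).2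
    set g : Set V → ℝ := fun X =>
      if (XA i X).card = 0 then 0 else f ((XA i X).card) / ((XA i X).card : ℝ) with hg
    have hg_nonneg : ∀ X, 0 ≤ g X := by
      intro X; rw [hg]
      dsimp only
      split
      · exact le_rfl
      · exact div_nonneg (hf.nonneg _) (by positivity)
    have step1 : ∀ X ∈ Zt, f ((XA i X).card) * (ρ : ℝ)
        ≤ g X * ∑ d ∈ XA i X, ∑ e ∈ G.edgeFinset,
            (if e ∈ ((R d).bypass).edges then (cc (src d) e : ℝ) else 0) := by
      intro X hX
      rcases Nat.eq_zero_or_pos (XA i X).card with h0 | h0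
      · have hXAe : XA i X = ∅ := Finset.card_eq_zero.mp h0
        rw [h0, hf.zero, hXAe]
        simp
      · have hk0 : (XA i X).card ≠ 0 := by omega
        have hkpos : (0 : ℝ) < ((XA i X).card : ℝ) := by positivity
        have hgX : g X = f ((XA i X).card) / ((XA i X).card : ℝ) := by
          rw [hg]; simp [hk0]
        have hper : ∀ d ∈ XA i X, (ρ : ℝ) ≤ ∑ e ∈ G.edgeFinset,
            (if e ∈ ((R d).bypass).edges then (cc (src d) e : ℝ) else 0) := by
          intro d hd
          have h1 := hdemand X (hZtZ X hX) d hd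
          calc (ρ : ℝ) ≤ ((∑ e ∈ G.edgeFinset,
                if e ∈ ((R d).bypass).edges then cc (src d) e else 0 : ℕ) : ℝ) := by
                exact_mod_cast h1
            _ = _ := by
                push_cast [apply_ite (Nat.cast : ℕ → ℝ)]
                norm_num
        have hsum : ((XA i X).card : ℝ) * (ρ : ℝ) ≤ ∑ d ∈ XA i X, ∑ e ∈ G.edgeFinset,
            (if e ∈ ((R d).bypass).edges then (cc (src d) e : ℝ) else 0) := by
          have h2 := Finset.card_nsmul_le_sum (XA i X) _ ((ρ : ℝ)) hper
          simpa [nsmul_eq_mul] using h2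
        rw [hgX]
        calc f ((XA i X).card) * (ρ : ℝ)
            = (f ((XA i X).card) / ((XA i X).card : ℝ)) * (((XA i X).card : ℝ) * (ρ : ℝ)) := by
              field_simp
          _ ≤ _ := mul_le_mul_of_nonneg_left hsum (div_nonneg (hf.nonneg _) hkpos.le)
    -- per-edge estimate
    have peredge : ∀ e ∈ G.edgeFinset,
        ∑ X ∈ Zt, g X * ∑ d ∈ XA i X,
          (if e ∈ ((R d).bypass).edges then (cc (src d) e : ℝ) else 0)
        ≤ f (nE e) * (wt e : ℝ) := by
      intro e he
      revert he
      induction e using Sym2.ind with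
      | _ a b =>
      intro he
      have hadj : G.Adj a b := by rwa [SimpleGraph.mem_edgeFinset, SimpleGraph.mem_edgeSet] at he
      have hDm : ∀ sX sY : V, Dd sX sY
          ≤ min (Dd sX a) (Dd sX b) + wt s(a, b) + min (Dd sY a) (Dd sY b) := by
        intro sX sY
        have t1 := hD_tri sX a sY
        have t2 := hD_tri sX b sY
        have t3 := hD_tri a b sY
        have t4 := hD_tri b a sY
        have t5 := hD_adj a b hadj
        have t6 : Dd b a = Dd a b := hD_comm b a
        have t7 : Dd a sY = Dd sY a := hD_comm a sY
        have t8 : Dd b sY = Dd sY b := hD_comm b sY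
        omega
      set F : Set V → Finset ι :=
        fun X => (XA i X).filter (fun d => s(a, b) ∈ ((R d).bypass).edges) with hF
      set C : Set V → ℕ := fun X => (F X).sup (fun d => cc (src d) s(a, b)) with hC
      have hterm : ∀ X ∈ Zt,
          g X * ∑ d ∈ XA i X, (if s(a, b) ∈ ((R d).bypass).edges
              then (cc (src d) s(a, b) : ℝ) else 0)
          ≤ f (nE s(a, b)) * (C X : ℝ) := by
        intro X hX
        have hsum_eq : ∑ d ∈ XA i X, (if s(a, b) ∈ ((R d).bypass).edges
              then (cc (src d) s(a, b) : ℝ) else 0)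
            = ∑ d ∈ F X, (cc (src d) s(a, b) : ℝ) := by
          rw [hF, Finset.sum_filter]
        rw [hsum_eq]
        have h1 : ∑ d ∈ F X, (cc (src d) s(a, b) : ℝ) ≤ ((F X).card : ℝ) * (C X : ℝ) := by
          have h2 := Finset.sum_le_card_nsmul (F X) (fun d => (cc (src d) s(a, b) : ℝ))
            ((C X : ℝ)) (fun d hd => by
              have hle : cc (src d) s(a, b) ≤ C X := by
                rw [hC]; exact Finset.le_sup (f := fun d => cc (src d) s(a, b)) hd
              simpa using hle)
          simpa [nsmul_eq_mul] using h2
        have h2 : g X * ((F X).card : ℝ) ≤ f ((F X).card) := by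
          rcases Nat.eq_zero_or_pos (XA i X).card with h0 | h0
          · have hXAe : XA i X = ∅ := Finset.card_eq_zero.mp h0
            have hFe : F X = ∅ := by simp [hF, hXAe]
            rw [hg]
            simp [h0, hFe, hf.zero]
          · have hk0 : (XA i X).card ≠ 0 := by omega
            have hle : (F X).card ≤ (XA i X).card :=
              Finset.card_le_card (by rw [hF]; exact Finset.filter_subset _ _)
            have hconc := canonical_ratio hf ((XA i X).card) ((F X).card) hle
            have hkpos : (0 : ℝ) < ((XA i X).card : ℝ) := by positivity
            simp only [hg, hk0, if_false]
            rw [div_mul_eq_mul_div, div_le_iff₀ hkpos]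
            nlinarith
        have h3 : f ((F X).card) ≤ f (nE s(a, b)) := by
          apply hf.mono
          rw [hnE]
          apply Finset.card_le_card
          intro d hd
          rw [hF] at hd
          simp only [Finset.mem_filter] at hd ⊢
          exact ⟨hXA_sub i X hd.1, ((R d).edges_bypass_subset) hd.2⟩
        have hCnn : (0 : ℝ) ≤ (C X : ℝ) := by positivity
        calc g X * ∑ d ∈ F X, (cc (src d) s(a, b) : ℝ)
            ≤ g X * (((F X).card : ℝ) * (C X : ℝ)) :=
              mul_le_mul_of_nonneg_left h1 (hg_nonneg X)
          _ = (g X * ((F X).card : ℝ)) * (C X : ℝ) := by ring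
          _ ≤ f ((F X).card) * (C X : ℝ) := mul_le_mul_of_nonneg_right h2 hCnn
          _ ≤ f (nE s(a, b)) * (C X : ℝ) := mul_le_mul_of_nonneg_right h3 hCnn
      have hCsumNat : ∑ X ∈ Zt, C X ≤ wt s(a, b) := by
        set T := Zt.filter (fun X => (F X).Nonempty) with hT
        have hTsum : ∑ X ∈ Zt, C X = ∑ X ∈ T, C X := by
          rw [hT]
          symm
          apply Finset.sum_filter_of_ne
          intro X hX hne
          rw [Finset.nonempty_iff_ne_empty]
          intro h
          apply hne
          simp [hC, h]
        rw [hTsum]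
        rcases T.eq_empty_or_nonempty with hTe | hTne
        · rw [hTe]; simp
        obtain ⟨X₀, hX₀⟩ := hTne
        obtain ⟨d₀, -⟩ := (Finset.mem_filter.mp hX₀).2
        haveI : Nonempty ι := ⟨d₀⟩
        have hrep : ∀ X ∈ T, ∃ d, d ∈ F X ∧ C X = cc (src d) s(a, b) := by
          intro X hX
          obtain ⟨d, hd, hval⟩ := Finset.exists_mem_eq_sup (F X)
            (Finset.mem_filter.mp hX).2 (fun d => cc (src d) s(a, b))
          exact ⟨d, hd, hval⟩
        choose! df hdf1 hdf2 using hrep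
        set P := T.filter (fun X => 0 < C X) with hP
        have hPsum : ∑ X ∈ T, C X = ∑ X ∈ P, C X := by
          rw [hP]
          symm
          apply Finset.sum_filter_of_ne
          intro X hX h
          omega
        rw [hPsum]
        have hPT : ∀ X ∈ P, X ∈ T := fun X hX => (Finset.mem_filter.mp hX).1
        have hCval : ∀ X ∈ P, C X = min (wt s(a, b))
            (ρ - min (Dd (src (df X)) a) (Dd (src (df X)) b)) := by
          intro X hX
          rw [hdf2 X (hPT X hX)]
          simp only [hcc]
          rw [hmed_mk]
        have hdfXA : ∀ X ∈ P, df X ∈ XA i X := by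
          intro X hX
          have := hdf1 X (hPT X hX)
          rw [hF] at this
          exact (Finset.mem_filter.mp this).1
        have hfarP : ∀ X ∈ P, ∀ Y ∈ P, X ≠ Y →
            2 * ρ < Dd (src (df X)) (src (df Y)) := by
          intro X hX Y hY hXY
          have hXZt : X ∈ Zt := (Finset.mem_filter.mp (hPT X hX)).1
          have hYZt : Y ∈ Zt := (Finset.mem_filter.mp (hPT Y hY)).1
          have hcXY : col i X = col i Y := by rw [hZtcol X hXZt, hZtcol Y hYZt]
          exact hfar2 X (hZtZ X hXZt) Y (hZtZ Y hYZt) hXY hcXY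
            (df X) (hdfXA X hX) (df Y) (hdfXA Y hY)
        set SA := P.filter (fun X => Dd (src (df X)) a < ρ) with hSA
        set SB := P.filter (fun X => ¬ Dd (src (df X)) a < ρ) with hSB
        have hsplit : ∑ X ∈ P, C X = ∑ X ∈ SA, C X + ∑ X ∈ SB, C X := by
          rw [hSA, hSB]
          exact (Finset.sum_filter_add_sum_filter_not P _ _).symm
        have hSAP : ∀ X ∈ SA, X ∈ P := fun X hX => (Finset.mem_filter.mp hX).1
        have hSBP : ∀ X ∈ SB, X ∈ P := fun X hX => (Finset.mem_filter.mp hX).1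
        have hcardA : SA.card ≤ 1 := by
          rw [Finset.card_le_one]
          intro X hX Y hY
          by_contra hne
          have h1 : Dd (src (df X)) a < ρ := (Finset.mem_filter.mp hX).2
          have h2 : Dd (src (df Y)) a < ρ := (Finset.mem_filter.mp hY).2
          have h3 := hfarP X (hSAP X hX) Y (hSAP Y hY) hne
          have h4 := hD_tri (src (df X)) a (src (df Y))
          have h5 : Dd a (src (df Y)) = Dd (src (df Y)) a := hD_comm _ _
          omega
        have hcardB : SB.card ≤ 1 := by
          rw [Finset.card_le_one]
          intro X hX Y hY
          by_contra hne
          have hXP := hSBP X hX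
          have hYP := hSBP Y hY
          have h1 : ¬ Dd (src (df X)) a < ρ := (Finset.mem_filter.mp hX).2
          have h2 : ¬ Dd (src (df Y)) a < ρ := (Finset.mem_filter.mp hY).2
          have hb1 : Dd (src (df X)) b < ρ := by
            have := hCval X hXP
            have hpos : 0 < C X := (Finset.mem_filter.mp hXP).2
            omega
          have hb2 : Dd (src (df Y)) b < ρ := by
            have := hCval Y hYP
            have hpos : 0 < C Y := (Finset.mem_filter.mp hYP).2
            omega
          have h3 := hfarP X hXP Y hYP hne
          have h4 := hD_tri (src (df X)) b (src (df Y))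
          have h5 : Dd b (src (df Y)) = Dd (src (df Y)) b := hD_comm _ _
          omega
        have hCwt : ∀ X ∈ P, C X ≤ wt s(a, b) := by
          intro X hX
          rw [hCval X hX]
          exact min_le_left _ _
        rw [hsplit]
        rcases SA.eq_empty_or_nonempty with hAe | ⟨Xa, hXa⟩
        · rcases SB.eq_empty_or_nonempty with hBe | ⟨Xb, hXb⟩
          · rw [hAe, hBe]; simp
          · have hBsing : SB = {Xb} := Finset.eq_singleton_iff_unique_mem.mpr
              ⟨hXb, fun y hy => Finset.card_le_one.mp hcardB y hy Xb hXb⟩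
            rw [hAe, hBsing, Finset.sum_empty, Finset.sum_singleton, zero_add]
            exact hCwt Xb (hSBP Xb hXb)
        · have hAsing : SA = {Xa} := Finset.eq_singleton_iff_unique_mem.mpr
            ⟨hXa, fun y hy => Finset.card_le_one.mp hcardA y hy Xa hXa⟩
          rcases SB.eq_empty_or_nonempty with hBe | ⟨Xb, hXb⟩
          · rw [hAsing, hBe, Finset.sum_singleton, Finset.sum_empty, add_zero]
            exact hCwt Xa (hSAP Xa hXa)
          · have hBsing : SB = {Xb} := Finset.eq_singleton_iff_unique_mem.mpr
              ⟨hXb, fun y hy => Finset.card_le_one.mp hcardB y hy Xb hXb⟩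
            rw [hAsing, hBsing, Finset.sum_singleton, Finset.sum_singleton]
            have hne : Xa ≠ Xb := by
              intro h
              have h1 : Dd (src (df Xa)) a < ρ := (Finset.mem_filter.mp hXa).2
              have h2 : ¬ Dd (src (df Xb)) a < ρ := (Finset.mem_filter.mp hXb).2
              rw [h] at h1
              exact h2 h1
            have hfarXY := hfarP Xa (hSAP Xa hXa) Xb (hSBP Xb hXb) hne
            have hDm' := hDm (src (df Xa)) (src (df Xb))
            have e1 := hCval Xa (hSAP Xa hXa)
            have e2 := hCval Xb (hSBP Xb hXb)
            omega
      have hCsum : (∑ X ∈ Zt, (C X : ℝ)) ≤ (wt s(a, b) : ℝ) := by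
        exact_mod_cast hCsumNat
      calc ∑ X ∈ Zt, g X * ∑ d ∈ XA i X,
            (if s(a, b) ∈ ((R d).bypass).edges then (cc (src d) s(a, b) : ℝ) else 0)
          ≤ ∑ X ∈ Zt, f (nE s(a, b)) * (C X : ℝ) := Finset.sum_le_sum hterm
        _ = f (nE s(a, b)) * ∑ X ∈ Zt, (C X : ℝ) := by rw [Finset.mul_sum]
        _ ≤ f (nE s(a, b)) * (wt s(a, b) : ℝ) :=
            mul_le_mul_of_nonneg_left hCsum (hf.nonneg _)
    calc ∑ X ∈ Zt, f ((XA i X).card) * (ρ : ℝ)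
        ≤ ∑ X ∈ Zt, g X * ∑ d ∈ XA i X, ∑ e ∈ G.edgeFinset,
            (if e ∈ ((R d).bypass).edges then (cc (src d) e : ℝ) else 0) :=
          Finset.sum_le_sum step1
      _ = ∑ X ∈ Zt, ∑ e ∈ G.edgeFinset, g X * ∑ d ∈ XA i X,
            (if e ∈ ((R d).bypass).edges then (cc (src d) e : ℝ) else 0) := by
          refine Finset.sum_congr rfl fun X hX => ?_
          rw [Finset.sum_comm, Finset.mul_sum]
      _ = ∑ e ∈ G.edgeFinset, ∑ X ∈ Zt, g X * ∑ d ∈ XA i X,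
            (if e ∈ ((R d).bypass).edges then (cc (src d) e : ℝ) else 0) :=
          Finset.sum_comm
      _ ≤ ∑ e ∈ G.edgeFinset, f (nE e) * (wt e : ℝ) := Finset.sum_le_sum peredge
      _ = routeCost G wt f A R := by rw [routeCost]
  have hfiber : ∑ X ∈ Z i, f ((XA i X).card) * (ρ : ℝ)
      = ∑ t ∈ Finset.Icc 1 χ, ∑ X ∈ (Z i).filter (fun X => col i X = t),
          f ((XA i X).card) * (ρ : ℝ) :=
    (Finset.sum_fiberwise_of_maps_to (fun X hX => hcol_mem i (by omega) X hX) _).symm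
  calc ∑ X ∈ Z i, f ((XA i X).card) * (ρ : ℝ)
      = ∑ t ∈ Finset.Icc 1 χ, ∑ X ∈ (Z i).filter (fun X => col i X = t),
          f ((XA i X).card) * (ρ : ℝ) := hfiber
    _ ≤ ∑ _t ∈ Finset.Icc 1 χ, routeCost G wt f A R :=
        Finset.sum_le_sum fun t _ => hcolor t
    _ = (χ : ℝ) * routeCost G wt f A R := by
        rw [Finset.sum_const, Nat.card_Icc]
        simp [nsmul_eq_mul]
    _ = routeCost G wt f A R * (χ : ℝ) := mul_comm _ _
end
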